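/- arXiv:1705.04280 — 3 statements merged into one kernel-verified Lean document; each statement's English description precedes it below -/
import Mathlib

section
/- Let i ≠ j with m_{ij} < ∞, let u, v be words, and set w₁ = u·{s_is_j}^{m_{ij}}·v, so that ρ(w₁) = ρ(u)·(p,i)(q,j)(p+1,i)⋯·ρ₁ for some p, q ∈ ℕ₀, where the middle block consists of m_{ij} pairs whose second components alternate between i and j, and ρ₁ is some sequence of pairs. Set w₂ = u·{s_js_i}^{m_{ij}}·v. Then w₂ <_l w₁ if and only if both of the following hold: (1) q ≥ 1, and (2) every pair (r,k) occurring in ρ(u) satisfies (r,k) < (q−1,j) in the lexicographic order on ℕ₀ × {1,…,n}. -/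
/-! Words over the alphabet `Fin n`, the map `ρ`, the total order `<_l`,
alternating words, and equivalence of words with respect to a Coxeter matrix. -/

/-- The lexicographic order on pairs `(r, i) ∈ ℕ × Fin n`. -/
def PairLt {n : ℕ} (p q : ℕ × Fin n) : Prop :=
  p.1 < q.1 ∨ (p.1 = q.1 ∧ p.2 < q.2)

/-- Auxiliary function for `rho`: given the previous pair, attach to each letter the
smallest admissible first component. -/
def rhoAux {n : ℕ} : ℕ × Fin n → List (Fin n) → List (ℕ × Fin n)
  | _, [] => []
  | prev, i :: rest =>
      let r : ℕ := if prev.2 < i then prev.1 else prev.1 + 1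
      (r, i) :: rhoAux (r, i) rest

/-- The map `ρ` sending a word `s_{i₁} ⋯ s_{i_m}` to the sequence of pairs
`(r₁,i₁) ⋯ (r_m,i_m)` where `0 = r₁ ≤ ⋯ ≤ r_m` are the smallest non-negative integers
with `(r₁,i₁) < (r₂,i₂) < ⋯ < (r_m,i_m)` lexicographically. -/
def rho {n : ℕ} : List (Fin n) → List (ℕ × Fin n)
  | [] => []
  | i :: rest => (0, i) :: rhoAux (0, i) rest

/-- The total order `<_l` on words: first compare lengths, then compare `ρ`-sequences
lexicographically. -/
def WordLt {n : ℕ} (w w' : List (Fin n)) : Prop :=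
  w.length < w'.length ∨ (w.length = w'.length ∧ List.Lex PairLt (rho w) (rho w'))

/-- The alternating word `{s_i s_j}^a = s_i s_j s_i s_j ⋯` with `a` letters. -/
def altWord {n : ℕ} : Fin n → Fin n → ℕ → List (Fin n)
  | _, _, 0 => []
  | i, j, a + 1 => i :: altWord j i a

/-- Two words are equivalent iff they represent the same element of the Coxeter group. -/
def WordEquiv {n : ℕ} (M : CoxeterMatrix (Fin n)) (w w' : List (Fin n)) : Prop :=
  M.toCoxeterSystem.wordProd w = M.toCoxeterSystem.wordProd w'

/-- A word is leftmost if it is `<_l`-smaller than every other word equivalent to it. -/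
def Leftmost {n : ℕ} (M : CoxeterMatrix (Fin n)) (w : List (Fin n)) : Prop :=
  ∀ w' : List (Fin n), WordEquiv M w w' → w' ≠ w → WordLt w w'

/-- The block of pairs `(p,i)(q,j)(p+1,i)(q+1,j)⋯` with the given number of pairs,
whose second components alternate between `i` and `j`. -/
def pairBlock {n : ℕ} : Fin n → Fin n → ℕ → ℕ → ℕ → List (ℕ × Fin n)
  | _, _, _, _, 0 => []
  | i, j, p, q, a + 1 => (p, i) :: pairBlock j i q (p + 1) a

/-! The pair attached to a letter `a` is the least pair `(r, a)` above the previous one. The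
first letter of the exchanged block in `w₂` gets the pair `(r', j)` with `(r', j)` least above
the last pair `x` of `ρ(u)`, and `w₂ <_l w₁` means `(r', j) < (p, i)`. Since `(q, j)` is the
least pair `(·, j)` above `(p, i)`, the pairs `(·, j)` below `(p, i)` are exactly those up to
`(q - 1, j)` (none if `q = 0`), so `(r', j) < (p, i)` iff `(r', j) ≤ (q - 1, j)` iff
`x < (q - 1, j)`; as `ρ(u)` increases, this says that all of `ρ(u)` lies below `(q - 1, j)`. -/

namespace PairLt

variable {n : ℕ}

instance : Std.Irrefl (@PairLt n) :=
  ⟨fun _ => by rintro (h | ⟨_, h⟩) <;> exact lt_irrefl _ h⟩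

instance : Trans (@PairLt n) PairLt PairLt where
  trans := by
    rintro _ _ _ (h | ⟨e, h⟩) (h' | ⟨e', h'⟩)
    · exact .inl (h.trans h')
    · exact .inl (e' ▸ h)
    · exact .inl (e ▸ h')
    · exact .inr ⟨e.trans e', h.trans h'⟩

end PairLt

lemma List.lex_append_cons_iff {α : Type*} {r : α → α → Prop} [Std.Irrefl r] {x y : α}
    (hxy : x ≠ y) (A s t : List α) : Lex r (A ++ x :: s) (A ++ y :: t) ↔ r x y := by
  induction A with
  | nil =>
    refine ⟨fun h => ?_, .rel⟩
    cases h with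
    | rel h => exact h
    | cons => exact absurd rfl hxy
  | cons a A ih => exact lex_cons_iff.trans ih

lemma List.forall_mem_rel_iff_getLast? {α : Type*} {R : α → α → Prop} [Trans R R R]
    {l : List α} (hl : l.IsChain R) (c : α) :
    (∀ x ∈ l, R x c) ↔ ∀ x ∈ l.getLast?, R x c := by
  rw [isChain_iff_pairwise] at hl
  obtain rfl | ⟨l, b, rfl⟩ := l.eq_nil_or_concat
  · simp
  rw [concat_eq_append, pairwise_append] at hl
  simp only [concat_eq_append, getLast?_concat, Option.mem_def, Option.some.injEq,
    forall_eq', mem_append, mem_singleton]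
  exact ⟨fun h => h b (.inr rfl), fun h x hx =>
    hx.elim (fun hx => _root_.trans (hl.2.2 x hx b (mem_singleton_self b)) h) (· ▸ h)⟩

section Rho

variable {n : ℕ}

def nextPair (x : ℕ × Fin n) (a : Fin n) : ℕ × Fin n :=
  (if x.2 < a then x.1 else x.1 + 1, a)

/-- The pair `ρ` attaches to a letter `a` whose predecessor got the pair `o`
(`none` for the first letter of a word). -/
def startPair : Option (ℕ × Fin n) → Fin n → ℕ × Fin n
  | none, a => (0, a)
  | some x, a => nextPair x a

lemma startPair_snd (o : Option (ℕ × Fin n)) (a : Fin n) : (startPair o a).2 = a := by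
  cases o <;> rfl

lemma pairLt_nextPair (x : ℕ × Fin n) (a : Fin n) : PairLt x (nextPair x a) := by
  unfold nextPair PairLt
  split_ifs with h
  · exact .inr ⟨rfl, h⟩
  · exact .inl (Nat.lt_succ_self _)

lemma rhoAux_cons (x : ℕ × Fin n) (a : Fin n) (w : List (Fin n)) :
    rhoAux x (a :: w) = nextPair x a :: rhoAux (nextPair x a) w := rfl

lemma isChain_rhoAux (x : ℕ × Fin n) (w : List (Fin n)) :
    (x :: rhoAux x w).IsChain PairLt := by
  induction w generalizing x with
  | nil => exact .singleton x
  | cons a w ih => exact .cons_cons (pairLt_nextPair x a) (ih _)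

lemma isChain_rho : ∀ u : List (Fin n), (rho u).IsChain PairLt
  | [] => .nil
  | a :: u => isChain_rhoAux (0, a) u

lemma rhoAux_append_cons (x : ℕ × Fin n) (u : List (Fin n)) (a : Fin n) (w : List (Fin n)) :
    rhoAux x (u ++ a :: w) =
      rhoAux x u ++ nextPair ((x :: rhoAux x u).getLast (List.cons_ne_nil _ _)) a ::
        rhoAux (nextPair ((x :: rhoAux x u).getLast (List.cons_ne_nil _ _)) a) w := by
  induction u generalizing x with
  | nil => rfl
  | cons b u ih => simp only [List.cons_append, rhoAux_cons, ih, List.getLast_cons_cons]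

lemma rho_append_cons (u : List (Fin n)) (a : Fin n) (w : List (Fin n)) :
    rho (u ++ a :: w) =
      rho u ++ startPair (rho u).getLast? a :: rhoAux (startPair (rho u).getLast? a) w := by
  cases u with
  | nil => rfl
  | cons b u =>
    simp only [List.cons_append, rho, rhoAux_append_cons,
      List.getLast?_eq_some_getLast (List.cons_ne_nil _ _), startPair]

lemma startPair_lt_startPair_iff {i j : Fin n} (hij : i ≠ j) (o : Option (ℕ × Fin n)) :
    PairLt (startPair o j) (startPair o i) ↔
      1 ≤ (nextPair (startPair o i) j).1 ∧
        ∀ x ∈ o, PairLt x ((nextPair (startPair o i) j).1 - 1, j) := by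
  have hij' : (i : ℕ) ≠ j := Fin.val_ne_of_ne hij
  cases o <;>
  · simp only [startPair, nextPair, PairLt, Fin.lt_def, Option.mem_def, reduceCtorEq,
      Option.some.injEq, forall_eq', IsEmpty.forall_iff, implies_true, and_true, true_and,
      lt_self_iff_false, false_or]
    split_ifs <;> omega

end Rho

lemma length_altWord {n : ℕ} (i j : Fin n) (a : ℕ) : (altWord i j a).length = a := by
  induction a generalizing i j with
  | zero => rfl
  | succ a ih => simp [altWord, ih]

/-- Lemma on exchanging one relation:
for `w₁ = u · {s_i s_j}^{m_{ij}} · v` with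
`ρ(w₁) = ρ(u) · (p,i)(q,j)(p+1,i)⋯ · ρ₁` (middle block of `m_{ij}` pairs) and
`w₂ = u · {s_j s_i}^{m_{ij}} · v`, one has `w₂ <_l w₁` iff `1 ≤ q` and every pair
in `ρ(u)` is lexicographically smaller than `(q-1, j)`. -/
theorem stmt0 {n : ℕ} (M : CoxeterMatrix (Fin n)) (i j : Fin n) (hij : i ≠ j)
    (hfin : M i j ≠ 0) (u v : List (Fin n)) (p q : ℕ) (ρ₁ : List (ℕ × Fin n))
    (hρ : rho (u ++ altWord i j (M i j) ++ v)
        = rho u ++ pairBlock i j p q (M i j) ++ ρ₁) :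
    WordLt (u ++ altWord j i (M i j) ++ v) (u ++ altWord i j (M i j) ++ v) ↔
      (1 ≤ q ∧ ∀ x ∈ rho u, PairLt x (q - 1, j)) := by
  have hm : 2 ≤ M i j := by
    have := M.off_diagonal i j hij
    omega
  obtain ⟨k, hk⟩ := Nat.exists_eq_add_of_le' hm
  have hword (a b : Fin n) :
      u ++ altWord a b (k + 2) ++ v = u ++ a :: b :: (altWord a b k ++ v) := by
    simp [altWord]
  rw [hk, hword, rho_append_cons, rhoAux_cons, pairBlock, pairBlock, List.append_assoc,
    List.cons_append, List.cons_append, List.append_cancel_left_eq] at hρ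
  obtain rfl : (nextPair (startPair (rho u).getLast? i) j).1 = q :=
    congrArg Prod.fst (List.cons.inj (List.cons.inj hρ).2).1
  have hne : startPair (rho u).getLast? j ≠ startPair (rho u).getLast? i :=
    ne_of_apply_ne Prod.snd (by simpa [startPair_snd] using hij.symm)
  rw [List.forall_mem_rel_iff_getLast? (isChain_rho u), ← startPair_lt_startPair_iff hij,
    WordLt, hk, hword, hword, rho_append_cons, rho_append_cons,
    List.lex_append_cons_iff hne]
  simp [length_altWord]
end

section
/- For every m ∈ ℕ₀, E(m) = 0 if and only if m ≥ m* − 1. (In particular, when αβ ≥ 4, so that m* = ∞, E(m) ≠ 0 for all m.) -/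
/-- The recursively defined quantities `E(m)` for fixed `α, β`:
`E(0) = 1`, `E(1) = α`, `E(2m) = β·E(2m−1) − E(2m−2)` and
`E(2m+1) = α·E(2m) − E(2m−1)` for `m ≥ 1` (subtraction of natural numbers). -/
def Efun (α β : ℕ) : ℕ → ℕ
  | 0 => 1
  | 1 => α
  | m + 2 => (if m % 2 = 0 then β else α) * Efun α β (m + 1) - Efun α β m

/-- The value `m* ∈ ℕ ∪ {∞}` determined by the product `αβ`. -/
def mStar (α β : ℕ) : ℕ∞ :=
  if α * β = 0 then 2
  else if α * β = 1 then 3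
  else if α * β = 2 then 4
  else if α * β = 3 then 6
  else ⊤

/-! With truncated subtraction a zero at a positive index is absorbing, so it suffices
to locate the first zero. For `αβ ≤ 3` (where `α = 0 ↔ β = 0` leaves only finitely many pairs)
the first zero sits at `m* − 1` by direct computation. For `αβ ≥ 4` the sequence never vanishes:
with `c(m)` the coefficient in `E(m + 2) = c(m)·E(m + 1) − E(m)`, the inequality
`c(m + 1)·E(m) ≤ 2·E(m + 1)` propagates, because `c(m)·c(m + 1) = αβ ≥ 4` turns it into
`2·E(m) ≤ c(m)·E(m + 1)`, whence `E(m + 2) ≥ E(m)`. -/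

namespace Efun

variable {α β : ℕ}

def coeff (α β m : ℕ) : ℕ := if m % 2 = 0 then β else α

lemma add_two (α β m : ℕ) : Efun α β (m + 2) = coeff α β m * Efun α β (m + 1) - Efun α β m := rfl

lemma coeff_add_two (α β m : ℕ) : coeff α β (m + 2) = coeff α β m := by
  simp [coeff, Nat.add_mod_right]

lemma coeff_mul_coeff_succ (α β m : ℕ) : coeff α β m * coeff α β (m + 1) = α * β := by
  rcases Nat.mod_two_eq_zero_or_one m with h | h
  · simp [coeff, h, Nat.succ_mod_two_eq_one_iff.mpr h, mul_comm]
  · simp [coeff, h, Nat.succ_mod_two_eq_zero_iff.mpr h]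

lemma eq_zero_of_le {n m : ℕ} (hn : 0 < n) (hz : Efun α β n = 0) (hnm : n ≤ m) :
    Efun α β m = 0 := by
  induction m, hnm using Nat.le_induction with
  | base => exact hz
  | succ m hnm ih =>
    obtain ⟨k, rfl⟩ : ∃ k, m = k + 1 := Nat.exists_eq_add_one.mpr (by omega)
    rw [add_two, ih, mul_zero, Nat.zero_sub]

lemma eq_zero_iff_le_of_first_zero {n : ℕ} (hn : 0 < n) (hz : Efun α β n = 0)
    (hne : ∀ m < n, Efun α β m ≠ 0) (m : ℕ) : Efun α β m = 0 ↔ n ≤ m :=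
  ⟨fun hm => not_lt.mp fun hlt => hne m hlt hm, eq_zero_of_le hn hz⟩

lemma pos_and_coeff_mul_le (h : 4 ≤ α * β) (m : ℕ) :
    0 < Efun α β m ∧ coeff α β (m + 1) * Efun α β m ≤ 2 * Efun α β (m + 1) := by
  induction m with
  | zero => exact ⟨Nat.one_pos, by simpa [Efun, coeff] using Nat.le_mul_of_pos_left α two_pos⟩
  | succ m ih =>
    obtain ⟨hpos, hle⟩ := ih
    have hhalf : 2 * Efun α β m ≤ coeff α β m * Efun α β (m + 1) := by
      have : 4 * Efun α β m ≤ 2 * (coeff α β m * Efun α β (m + 1)) :=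
        calc 4 * Efun α β m ≤ α * β * Efun α β m := Nat.mul_le_mul_right _ h
          _ = coeff α β m * (coeff α β (m + 1) * Efun α β m) := by
            rw [← mul_assoc, coeff_mul_coeff_succ]
          _ ≤ coeff α β m * (2 * Efun α β (m + 1)) := Nat.mul_le_mul_left _ hle
          _ = 2 * (coeff α β m * Efun α β (m + 1)) := by ring
      omega
    refine ⟨Nat.pos_of_mul_pos_left (lt_of_lt_of_le (by omega) hhalf), ?_⟩
    rw [coeff_add_two, add_two]
    omega

lemma pos_of_four_le_mul (h : 4 ≤ α * β) (m : ℕ) : 0 < Efun α β m :=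
  (pos_and_coeff_mul_le h m).1

end Efun

lemma mStar_eq_top {α β : ℕ} (h : 4 ≤ α * β) : mStar α β = ⊤ := by
  rw [mStar, if_neg (by omega), if_neg (by omega), if_neg (by omega), if_neg (by omega)]

lemma Efun_eq_zero_iff_of_mul_lt_four {α β : ℕ} (h0 : α = 0 ↔ β = 0) (h : α * β < 4) (m : ℕ) :
    Efun α β m = 0 ↔ mStar α β ≤ (m : ℕ∞) + 1 := by
  have hα : α ≤ 3 := by
    rcases Nat.eq_zero_or_pos β with hβ | hβ
    · omega
    · nlinarith
  have hβ : β ≤ 3 := by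
    rcases Nat.eq_zero_or_pos α with hα | hα
    · omega
    · nlinarith
  -- the bound `n < 6` makes the existential decidable
  obtain ⟨n, -, hstar, hn, hz, hne⟩ : ∃ n : ℕ, n < 6 ∧ mStar α β = (n : ℕ∞) + 1 ∧ 0 < n ∧
      Efun α β n = 0 ∧ ∀ k < n, Efun α β k ≠ 0 := by
    interval_cases α <;> interval_cases β <;> first | omega | decide
  rw [Efun.eq_zero_iff_le_of_first_zero hn hz hne, hstar]
  norm_cast
  simp

/-- for every `m ∈ ℕ₀`, `E(m) = 0` iff `m ≥ m* − 1`
(phrased as `m* ≤ m + 1` in `ℕ∞`); in particular, when `αβ ≥ 4` (so `m* = ∞`),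
`E(m) ≠ 0` for all `m`. -/
theorem stmt8 (α β : ℕ) (h0 : α = 0 ↔ β = 0) :
    (∀ m : ℕ, Efun α β m = 0 ↔ mStar α β ≤ (m : ℕ∞) + 1) ∧
    (4 ≤ α * β → ∀ m : ℕ, Efun α β m ≠ 0) := by
  have hne (h : 4 ≤ α * β) (m : ℕ) : Efun α β m ≠ 0 := (Efun.pos_of_four_le_mul h m).ne'
  refine ⟨fun m => ?_, hne⟩
  rcases lt_or_ge (α * β) 4 with h | h
  · exact Efun_eq_zero_iff_of_mul_lt_four h0 h m
  · simp [hne h m, mStar_eq_top h]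
end

section
/- Let M, X, X′, Y, Y′, Z, T be A-modules and let f₁: M→X, f₂: M→X′, g₁₁: X→Y, g₁₂: X′→Y, g₂₂: X′→Y′, f′₂: X→Z, g′₁: Y→T, g′₂: Z→T be A-module homomorphisms. Assume that the sequence 0 → M → X ⊕ X′ → Y ⊕ Y′ → 0 is exact, where the first map is m ↦ (f₁(m), f₂(m)) and the second map is (x, x′) ↦ (g₁₁(x) + g₁₂(x′), g₂₂(x′)), and that the sequence 0 → X → Y ⊕ Z → T → 0 is exact, where the first map is x ↦ (g₁₁(x), f′₂(x)) and the second map is (y, z) ↦ g′₁(y) + g′₂(z). Then the sequence 0 → M → Z ⊕ X′ → T ⊕ Y′ → 0 is exact, where the first map is m ↦ (−f′₂(f₁(m)), f₂(m)) and the second map is (z, x′) ↦ (g′₂(z) + g′₁(g₁₂(x′)), g₂₂(x′)). -/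
/-!
The exactness of `0 → X → Y ⊕ Z → T → 0` says that the square formed by `g₁₁`, `f₂'`, `g₁'`
and `g₂'` is bicartesian up to the sign of `f₂'`. Transporting the summand `X` of the first
sequence along this square to `Z` therefore preserves exactness, which an element chase confirms.
-/

/-- A pair of `A`-module maps `f : P → Q`, `g : Q → R` forms a short exact sequence
`0 → P → Q → R → 0`: `f` is injective, `g` is surjective, and `range f = ker g`. -/
def IsShortExactSeq {A : Type*} [Ring A] {P Q R : Type*}
    [AddCommGroup P] [Module A P] [AddCommGroup Q] [Module A Q]
    [AddCommGroup R] [Module A R] (f : P →ₗ[A] Q) (g : Q →ₗ[A] R) : Prop :=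
  Function.Injective f ∧ Function.Surjective g ∧ LinearMap.range f = LinearMap.ker g

open LinearMap

theorem IsShortExactSeq.exact {A : Type*} [Ring A] {P Q R : Type*}
    [AddCommGroup P] [Module A P] [AddCommGroup Q] [Module A Q]
    [AddCommGroup R] [Module A R] {f : P →ₗ[A] Q} {g : Q →ₗ[A] R}
    (h : IsShortExactSeq f g) : Function.Exact f g :=
  LinearMap.exact_iff.mpr h.2.2.symm

section

variable {A : Type*} [Ring A] {M X X' Y Y' Z T : Type*}
    [AddCommGroup M] [Module A M] [AddCommGroup X] [Module A X]
    [AddCommGroup X'] [Module A X'] [AddCommGroup Y] [Module A Y]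
    [AddCommGroup Y'] [Module A Y'] [AddCommGroup Z] [Module A Z]
    [AddCommGroup T] [Module A T]
    {f₁ : M →ₗ[A] X} {f₂ : M →ₗ[A] X'}
    {g₁₁ : X →ₗ[A] Y} {g₁₂ : X' →ₗ[A] Y} {g₂₂ : X' →ₗ[A] Y'}
    {f₂' : X →ₗ[A] Z} {g₁' : Y →ₗ[A] T} {g₂' : Z →ₗ[A] T}

theorem injective_neg_comp_prod (hf : Function.Injective (f₁.prod f₂))
    (hg : Function.Injective (g₁₁.prod f₂')) (hc : ∀ m, g₁₁ (f₁ m) + g₁₂ (f₂ m) = 0) :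
    Function.Injective ((-(f₂' ∘ₗ f₁)).prod f₂) := by
  rw [injective_iff_map_eq_zero] at hf hg ⊢
  intro m hm
  simp only [prod_apply, Function.prod, LinearMap.neg_apply, LinearMap.comp_apply,
    Prod.mk_eq_zero, neg_eq_zero] at hm
  obtain ⟨hz, hx'⟩ := hm
  have hy : g₁₁ (f₁ m) = 0 := by simpa [hx'] using hc m
  have hx : f₁ m = 0 := hg _ (by simp [hy, hz])
  exact hf _ (by simp [hx, hx'])

theorem surjective_coprod_comp_prod_comp_snd
    (hg : Function.Surjective ((g₁₁.coprod g₁₂).prod (g₂₂ ∘ₗ snd A X X')))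
    (hg' : Function.Surjective (g₁'.coprod g₂')) (hc : ∀ x, g₁' (g₁₁ x) + g₂' (f₂' x) = 0) :
    Function.Surjective ((g₂'.coprod (g₁' ∘ₗ g₁₂)).prod (g₂₂ ∘ₗ snd A Z X')) := by
  rintro ⟨t, y'⟩
  obtain ⟨⟨y, z⟩, hyz⟩ := hg' t
  obtain ⟨⟨x, x'⟩, hxx'⟩ := hg (y, y')
  simp only [coprod_apply, prod_apply, Function.prod, LinearMap.comp_apply, snd_apply,
    Prod.ext_iff] at hyz hxx'
  refine ⟨(z - f₂' x, x'), Prod.ext ?_ hxx'.2⟩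
  simp only [coprod_apply, prod_apply, Function.prod, LinearMap.comp_apply, map_sub, ← hyz,
    ← hxx'.1, map_add]
  rw [← neg_eq_of_add_eq_zero_right (hc x)]
  abel

theorem exact_neg_comp_prod
    (h₁ : Function.Exact (f₁.prod f₂) ((g₁₁.coprod g₁₂).prod (g₂₂ ∘ₗ snd A X X')))
    (h₂ : Function.Exact (g₁₁.prod f₂') (g₁'.coprod g₂')) :
    Function.Exact ((-(f₂' ∘ₗ f₁)).prod f₂)
      ((g₂'.coprod (g₁' ∘ₗ g₁₂)).prod (g₂₂ ∘ₗ snd A Z X')) := by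
  simp only [Function.Exact, Prod.forall, Set.mem_range, coprod_apply, prod_apply,
    Function.prod, LinearMap.comp_apply, snd_apply, LinearMap.neg_apply, Prod.ext_iff,
    Prod.fst_zero, Prod.snd_zero] at h₁ h₂ ⊢
  intro z x'
  constructor
  · rintro ⟨hT, hY'⟩
    obtain ⟨x, hy, rfl⟩ := (h₂ (g₁₂ x') z).mp (by rwa [add_comm])
    obtain ⟨m, hx, rfl⟩ := (h₁ (-x) x').mp ⟨by rw [map_neg, hy, neg_add_cancel], hY'⟩
    exact ⟨m, by rw [hx, map_neg, neg_neg], rfl⟩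
  · rintro ⟨m, rfl, rfl⟩
    obtain ⟨hY, hY'⟩ := (h₁ _ _).mpr ⟨m, rfl, rfl⟩
    have hT := (h₂ _ _).mpr ⟨f₁ m, rfl, rfl⟩
    refine ⟨?_, hY'⟩
    rw [map_neg, ← neg_eq_of_add_eq_zero_right hT, neg_neg, ← map_add, hY, map_zero]

end

theorem stmt10_general
    (A : Type*) [Ring A]
    (M X X' Y Y' Z T : Type*)
    [AddCommGroup M] [Module A M] [AddCommGroup X] [Module A X]
    [AddCommGroup X'] [Module A X'] [AddCommGroup Y] [Module A Y]
    [AddCommGroup Y'] [Module A Y'] [AddCommGroup Z] [Module A Z]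
    [AddCommGroup T] [Module A T]
    (f₁ : M →ₗ[A] X) (f₂ : M →ₗ[A] X')
    (g₁₁ : X →ₗ[A] Y) (g₁₂ : X' →ₗ[A] Y) (g₂₂ : X' →ₗ[A] Y')
    (f₂' : X →ₗ[A] Z) (g₁' : Y →ₗ[A] T) (g₂' : Z →ₗ[A] T)
    (hex1 : IsShortExactSeq (f₁.prod f₂)
      ((g₁₁.coprod g₁₂).prod (g₂₂ ∘ₗ LinearMap.snd A X X')))
    (hex2 : IsShortExactSeq (g₁₁.prod f₂') (g₁'.coprod g₂')) :
    IsShortExactSeq ((-(f₂' ∘ₗ f₁)).prod f₂)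
      ((g₂'.coprod (g₁' ∘ₗ g₁₂)).prod (g₂₂ ∘ₗ LinearMap.snd A Z X')) := by
  have hc₁ : ∀ m, g₁₁ (f₁ m) + g₁₂ (f₂ m) = 0 := fun m =>
    congr_arg Prod.fst (hex1.exact.apply_apply_eq_zero m)
  have hc₂ : ∀ x, g₁' (g₁₁ x) + g₂' (f₂' x) = 0 := hex2.exact.apply_apply_eq_zero
  exact ⟨injective_neg_comp_prod hex1.1 hex2.1 hc₁,
    surjective_coprod_comp_prod_comp_snd hex1.2.1 hex2.2.1 hc₂,
    (LinearMap.exact_iff.mp (exact_neg_comp_prod hex1.exact hex2.exact)).symm⟩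

/-- over an Artin algebra `A` (an algebra over a commutative artinian
ring `k`, finitely generated as a `k`-module), given exact sequences
`0 → M → X ⊕ X' → Y ⊕ Y' → 0` (maps `m ↦ (f₁ m, f₂ m)` and
`(x,x') ↦ (g₁₁ x + g₁₂ x', g₂₂ x')`) and `0 → X → Y ⊕ Z → T → 0`
(maps `x ↦ (g₁₁ x, f₂' x)` and `(y,z) ↦ g₁' y + g₂' z`), the sequence
`0 → M → Z ⊕ X' → T ⊕ Y' → 0` with maps `m ↦ (−f₂'(f₁ m), f₂ m)` and
`(z,x') ↦ (g₂' z + g₁'(g₁₂ x'), g₂₂ x')` is exact. -/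
theorem stmt10 (k : Type*) [CommRing k] [IsArtinianRing k]
    (A : Type*) [Ring A] [Algebra k A] [Module.Finite k A]
    (M X X' Y Y' Z T : Type*)
    [AddCommGroup M] [Module A M] [AddCommGroup X] [Module A X]
    [AddCommGroup X'] [Module A X'] [AddCommGroup Y] [Module A Y]
    [AddCommGroup Y'] [Module A Y'] [AddCommGroup Z] [Module A Z]
    [AddCommGroup T] [Module A T]
    (f₁ : M →ₗ[A] X) (f₂ : M →ₗ[A] X')
    (g₁₁ : X →ₗ[A] Y) (g₁₂ : X' →ₗ[A] Y) (g₂₂ : X' →ₗ[A] Y')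
    (f₂' : X →ₗ[A] Z) (g₁' : Y →ₗ[A] T) (g₂' : Z →ₗ[A] T)
    (hex1 : IsShortExactSeq (f₁.prod f₂)
      ((g₁₁.coprod g₁₂).prod (g₂₂ ∘ₗ LinearMap.snd A X X')))
    (hex2 : IsShortExactSeq (g₁₁.prod f₂') (g₁'.coprod g₂')) :
    IsShortExactSeq ((-(f₂' ∘ₗ f₁)).prod f₂)
      ((g₂'.coprod (g₁' ∘ₗ g₁₂)).prod (g₂₂ ∘ₗ LinearMap.snd A Z X')) :=
  stmt10_general A M X X' Y Y' Z T f₁ f₂ g₁₁ g₁₂ g₂₂ f₂' g₁' g₂' hex1 hex2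
end
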